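/- (Intermediate claim in the proof of Theorem 1, case m ≤ 0.) Assume m ≤ 0 and W_m(n) ≠ 0 for every integer n ≥ −m. Then P(∂_z) : ℂ[[z]] → ℂ[[z]] is surjective and its kernel is a ℂ-vector subspace of ℂ[[z]] of dimension −m. -/

import Mathlib

/-!
If `u` vanishes below order `p - m`, the only terms of `P(∂_z) u` that reach the coefficient of
`z^p` come from the lowest coefficients `a_{j,α_j}` with `α_j - j = m`, and that coefficient is
`W_m(p - m) u_{p-m}`. So `P(∂_z)` is triangular with shift `d = -m` and nonzero diagonal: given `f`
and arbitrary `u_0, …, u_{d-1}`, the equation `P(∂_z) u = f` determines `u_n` for `n ≥ d`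
recursively. This gives surjectivity, and identifies the kernel with `ℂ^d` via its first `d`
coefficients.
-/

open PowerSeries

/-- Formal differentiation `∂_z` on `ℂ[[z]]` as a `ℂ`-linear map. -/
noncomputable def dz : PowerSeries ℂ →ₗ[ℂ] PowerSeries ℂ where
  toFun u := PowerSeries.mk fun n => ((n : ℂ) + 1) * PowerSeries.coeff (n + 1) u
  map_add' u v := by
    ext n
    simp [mul_add]
  map_smul' c u := by
    ext n
    simp
    ring

/-- The order of vanishing at `0` of a formal power series. -/
noncomputable def ordz (g : PowerSeries ℂ) : ℕ := sInf {k : ℕ | PowerSeries.coeff k g ≠ 0}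

/-- The operator `P(∂_z) u = Σ_{j∈Λ} a_j · ∂_z^j u`. -/
noncomputable def Pop (Λ : Finset ℕ) (a : ℕ → PowerSeries ℂ) :
    PowerSeries ℂ →ₗ[ℂ] PowerSeries ℂ :=
  ∑ j ∈ Λ, (LinearMap.mulLeft ℂ (a j)).comp (dz ^ j)

/-- The characteristic polynomial `W_q` evaluated at a natural number `n`:
`W_q(n) = Σ_{j∈Λ, α_j−j=q} a_{j,j+q} · n(n−1)⋯(n−j+1)`. -/
noncomputable def W (Λ : Finset ℕ) (a : ℕ → PowerSeries ℂ) (q : ℤ) (n : ℕ) : ℂ :=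
  ∑ j ∈ Λ.filter (fun j => (ordz (a j) : ℤ) - j = q),
    PowerSeries.coeff (ordz (a j)) (a j) * (n.descFactorial j : ℂ)

open Finset.HasAntidiagonal

namespace PowerSeries

variable {K : Type*} [Field K]

def IsTriangularWithShift (T : K⟦X⟧ →ₗ[K] K⟦X⟧) (d : ℕ) (c : ℕ → K) : Prop :=
  ∀ p u, (∀ i < p + d, coeff i u = 0) → coeff p (T u) = c (p + d) * coeff (p + d) u

/-- By triangularity, `coeff (n - d) (T u)` differs from its value on the truncation of `u` below `n`
by `c n * u_n` only. -/
noncomputable def triangularSolveCoeff (T : K⟦X⟧ →ₗ[K] K⟦X⟧) (d : ℕ) (c : ℕ → K)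
    (f : K⟦X⟧) (v : ℕ → K) (n : ℕ) : K :=
  if n < d then v n
  else (coeff (n - d) f -
      coeff (n - d) (T (mk fun i => if i < n then triangularSolveCoeff T d c f v i else 0))) / c n

namespace IsTriangularWithShift

variable {T : K⟦X⟧ →ₗ[K] K⟦X⟧} {d : ℕ} {c : ℕ → K}
  (hT : IsTriangularWithShift T d c) (hc : ∀ n, d ≤ n → c n ≠ 0)
include hT hc

theorem eq_zero_of_apply_eq_zero {u : K⟦X⟧} (hu : T u = 0) (h0 : ∀ i < d, coeff i u = 0) :
    u = 0 := by
  ext n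
  induction n using Nat.strong_induction_on with
  | _ n ih =>
    obtain hn | hn := lt_or_ge n d
    · exact h0 n hn
    · obtain ⟨p, rfl⟩ := Nat.exists_eq_add_of_le' hn
      have := hT p u ih
      rw [hu, map_zero] at this
      simpa [hc (p + d) (by omega)] using this.symm

theorem exists_apply_eq (f : K⟦X⟧) (v : ℕ → K) :
    ∃ u, T u = f ∧ ∀ i < d, coeff i u = v i := by
  set u := mk (triangularSolveCoeff T d c f v)
  refine ⟨u, ?_, fun i hi => by rw [coeff_mk, triangularSolveCoeff, if_pos hi]⟩
  ext p
  set trunc := mk fun i => if i < p + d then triangularSolveCoeff T d c f v i else 0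
  have hu : coeff (p + d) u = (coeff p f - coeff p (T trunc)) / c (p + d) := by
    rw [coeff_mk, triangularSolveCoeff, if_neg (by omega), Nat.add_sub_cancel]
  have htrunc : coeff (p + d) trunc = 0 := by simp only [trunc, coeff_mk, lt_irrefl, if_false]
  have hdiff := hT p (u - trunc) fun i hi => by
    simp only [u, trunc, map_sub, coeff_mk, if_pos hi, sub_self]
  rw [map_sub, map_sub, map_sub, hu, htrunc, sub_zero,
    mul_div_cancel₀ _ (hc _ (by omega))] at hdiff
  linear_combination hdiff

noncomputable def kerEquiv : LinearMap.ker T ≃ₗ[K] (Fin d → K) :=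
  LinearEquiv.ofBijective
    ((LinearMap.pi fun i : Fin d => coeff (R := K) i) ∘ₗ (LinearMap.ker T).subtype) <| by
    refine ⟨?_, fun w => ?_⟩
    · rw [← LinearMap.ker_eq_bot, LinearMap.ker_eq_bot']
      rintro ⟨u, hu⟩ h0
      ext1
      exact hT.eq_zero_of_apply_eq_zero hc hu fun i hi => congrFun h0 ⟨i, hi⟩
    · obtain ⟨u, hu, hcoeff⟩ :=
        hT.exists_apply_eq hc 0 fun i => if h : i < d then w ⟨i, h⟩ else 0
      exact ⟨⟨u, hu⟩, funext fun i => by simp [hcoeff i i.isLt]⟩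

end IsTriangularWithShift

end PowerSeries

theorem coeff_dz (n : ℕ) (u : ℂ⟦X⟧) : coeff n (dz u) = ((n : ℂ) + 1) * coeff (n + 1) u := by
  simp [dz]

theorem coeff_dz_pow (j l : ℕ) (u : ℂ⟦X⟧) :
    coeff l ((dz ^ j) u) = ((l + j).descFactorial j : ℂ) * coeff (l + j) u := by
  induction j generalizing l with
  | zero => simp
  | succ j ih =>
    rw [pow_succ', Module.End.mul_apply, coeff_dz, ih, show l + 1 + j = l + (j + 1) by ring,
      Nat.descFactorial_succ, show l + (j + 1) - j = l + 1 by omega]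
    push_cast
    ring

theorem coeff_of_lt_ordz {g : ℂ⟦X⟧} {k : ℕ} (hk : k < ordz g) : coeff k g = 0 := by
  by_contra h
  exact absurd (Nat.sInf_le (show k ∈ {k : ℕ | coeff k g ≠ 0} from h)) (not_le.mpr hk)

/-- With `α = ordz g`, only the product `g_α · (∂^j u)_{p-α}` can survive, and only when
`α - j = -d`. -/
theorem coeff_mul_dz_pow_of_forall_lt {g u : ℂ⟦X⟧} {j d p : ℕ} (hj : -(d : ℤ) ≤ ordz g - j)
    (hu : ∀ i < p + d, coeff i u = 0) :
    coeff p (g * (dz ^ j) u) =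
      (if (ordz g : ℤ) - j = -d then coeff (ordz g) g * ((p + d).descFactorial j : ℂ) else 0) *
        coeff (p + d) u := by
  set α := ordz g
  have hvanish : ∀ kl ∈ antidiagonal p, (kl.1 ≠ α ∨ (α : ℤ) - j ≠ -d) →
      coeff kl.1 g * coeff kl.2 ((dz ^ j) u) = 0 := by
    rintro ⟨k, l⟩ hkl hne
    rw [mem_antidiagonal] at hkl
    by_cases hk : k < α
    · rw [coeff_of_lt_ordz hk, zero_mul]
    · rw [coeff_dz_pow, hu _ (by omega), mul_zero, mul_zero]
  rw [coeff_mul]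
  split_ifs with hc
  · by_cases hαp : α ≤ p
    · rw [Finset.sum_eq_single_of_mem (α, p - α) (by simp; omega)
        fun kl hkl hne => hvanish kl hkl (.inl fun h => hne (Prod.ext h (by
          rw [mem_antidiagonal] at hkl; simp only; omega))),
        coeff_dz_pow, show p - α + j = p + d by omega]
      ring
    · rw [Finset.sum_eq_zero fun kl hkl => hvanish kl hkl (.inl (by
          rw [mem_antidiagonal] at hkl; omega)),
        Nat.descFactorial_eq_zero_iff_lt.mpr (by omega)]
      simp
  · rw [Finset.sum_eq_zero fun kl hkl => hvanish kl hkl (.inr hc), zero_mul]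

theorem isTriangularWithShift_Pop {Λ : Finset ℕ} {a : ℕ → ℂ⟦X⟧} {d : ℕ}
    (hα : ∀ j ∈ Λ, -(d : ℤ) ≤ ordz (a j) - j) :
    IsTriangularWithShift (Pop Λ a) d (W Λ a (-d)) := fun p u hu => by
  simp only [Pop, LinearMap.sum_apply, map_sum, LinearMap.comp_apply, LinearMap.mulLeft_apply]
  rw [W, Finset.sum_filter, Finset.sum_mul]
  exact Finset.sum_congr rfl fun j hj => coeff_mul_dz_pow_of_forall_lt (hα j hj) hu

theorem statement1_general (Λ : Finset ℕ) (hΛ : Λ.Nonempty) (a : ℕ → PowerSeries ℂ)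
    (m : ℤ) (hm : m = Λ.inf' hΛ (fun j => (ordz (a j) : ℤ) - j))
    (hm0 : m ≤ 0)
    (hW : ∀ n : ℕ, -m ≤ (n : ℤ) → W Λ a m n ≠ 0) :
    Function.Surjective (Pop Λ a) ∧
      FiniteDimensional ℂ (LinearMap.ker (Pop Λ a)) ∧
      (Module.finrank ℂ (LinearMap.ker (Pop Λ a)) : ℤ) = -m := by
  obtain ⟨d, rfl⟩ := Int.exists_eq_neg_ofNat hm0
  have hT : IsTriangularWithShift (Pop Λ a) d (W Λ a (-d)) :=
    isTriangularWithShift_Pop fun j hj => hm ▸ Finset.inf'_le _ hj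
  have hc : ∀ n, d ≤ n → W Λ a (-d) n ≠ 0 := fun n hn => hW n (by simpa using hn)
  have e := hT.kerEquiv hc
  refine ⟨fun f => ?_, e.symm.finiteDimensional, ?_⟩
  · obtain ⟨u, hu, -⟩ := hT.exists_apply_eq hc f 0
    exact ⟨u, hu⟩
  · rw [e.finrank_eq, Module.finrank_fin_fun, neg_neg]

/-- Intermediate claim in the proof of Theorem 1, case `m ≤ 0`:
if `m ≤ 0` and `W_m(n) ≠ 0` for every integer `n ≥ −m`, then `P(∂_z)` is surjective
on `ℂ[[z]]` and its kernel is a `ℂ`-subspace of dimension `−m`. -/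
theorem statement1 (Λ : Finset ℕ) (hΛ : Λ.Nonempty) (a : ℕ → PowerSeries ℂ)
    (ha : ∀ j ∈ Λ, a j ≠ 0)
    (m : ℤ) (hm : m = Λ.inf' hΛ (fun j => (ordz (a j) : ℤ) - j))
    (hm0 : m ≤ 0)
    (hW : ∀ n : ℕ, -m ≤ (n : ℤ) → W Λ a m n ≠ 0) :
    Function.Surjective (Pop Λ a) ∧
      FiniteDimensional ℂ (LinearMap.ker (Pop Λ a)) ∧
      (Module.finrank ℂ (LinearMap.ker (Pop Λ a)) : ℤ) = -m :=
  statement1_general Λ hΛ a m hm hm0 hW
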